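/- Every x ∈ c₀(Ω) has the representation x = Σ_k E_k t^(k) converging in the norm of c₀(Ω), where E_k = (Ωx)_k and t^(k) is the sequence with t^(k)_k = 1/k, t^(k)_{k+1} = −1/(k+1), 0 otherwise; i.e., ‖x − Σ_{k=1}^n E_k t^(k)‖ → 0 as n → ∞, where ‖y‖ = sup_m |(Ωy)_m|. Moreover the coefficients E_k are uniquely determined. -/

import Mathlib

open Filter Finset Topology

noncomputable def OmegaT (x : ℕ → ℝ) (n : ℕ) : ℝ := ∑ j ∈ Finset.Icc 1 n, (j : ℝ) * x j

noncomputable def tBasis (k : ℕ) : ℕ → ℝ := fun n =>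
  if n = k then 1 / k else if n = k + 1 then -(1 / (k + 1 : ℝ)) else 0

noncomputable def omegaNorm (y : ℕ → ℝ) : ℝ := ⨆ m : ℕ, |OmegaT y m|

/-! Ω sends `t⁽ᵏ⁾` to the unit vector `e⁽ᵏ⁾`, so `Ω(x - ∑_{k ≤ n} Eₖ t⁽ᵏ⁾)` is `Ωx` with its first `n`
entries replaced by `(Ωx)ₖ - Eₖ`. With `Eₖ = (Ωx)ₖ` only the tail `m > n` of `Ωx` survives, and its
supremum tends to `0`; conversely the `k`-th entry `(Ωx)ₖ - Eₖ` is bounded by the norm of every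
remainder with `n ≥ k`, which forces it to vanish. -/

theorem tendsto_iSup_abs_tail {u : ℕ → ℝ} (hu : Tendsto u atTop (𝓝 0)) :
    Tendsto (fun n => ⨆ m, |if n < m then u m else 0|) atTop (𝓝 0) := by
  rw [Metric.tendsto_atTop] at hu ⊢
  intro ε hε
  obtain ⟨N, hN⟩ := hu (ε / 2) (half_pos hε)
  refine ⟨N, fun n hn => ?_⟩
  have hsup : (⨆ m, |if n < m then u m else 0|) ≤ ε / 2 := by
    refine ciSup_le fun m => ?_
    split_ifs with hm
    · simpa [Real.dist_eq] using (hN m (by omega)).le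
    · simpa using (half_pos hε).le
  rw [Real.dist_eq, sub_zero, abs_of_nonneg (Real.iSup_nonneg fun _ => abs_nonneg _)]
  linarith

lemma omegaT_zero (x : ℕ → ℝ) : OmegaT x 0 = 0 := by
  simp [OmegaT]

lemma omegaT_succ (x : ℕ → ℝ) (m : ℕ) :
    OmegaT x (m + 1) = OmegaT x m + (m + 1 : ℕ) * x (m + 1) :=
  Finset.sum_Icc_succ_top (by omega) _

lemma omegaT_sub (x y : ℕ → ℝ) (m : ℕ) :
    OmegaT (x - y) m = OmegaT x m - OmegaT y m := by
  simp [OmegaT, mul_sub, Finset.sum_sub_distrib]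

lemma omegaT_sum_mul {ι : Type*} (s : Finset ι) (E : ι → ℝ) (f : ι → ℕ → ℝ) (m : ℕ) :
    OmegaT (fun j => ∑ k ∈ s, E k * f k j) m = ∑ k ∈ s, E k * OmegaT (f k) m := by
  simp only [OmegaT, Finset.mul_sum]
  rw [Finset.sum_comm]
  exact Finset.sum_congr rfl fun _ _ => Finset.sum_congr rfl fun _ _ => by ring

lemma omegaT_tBasis {k : ℕ} (hk : 1 ≤ k) (m : ℕ) :
    OmegaT (tBasis k) m = if m = k then 1 else 0 := by
  induction m with
  | zero => simp [omegaT_zero, show 0 ≠ k by omega]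
  | succ m ih =>
    have hk0 : (k : ℝ) ≠ 0 := by positivity
    have hk1 : (k : ℝ) + 1 ≠ 0 := by positivity
    rw [omegaT_succ, ih, tBasis]
    by_cases hmk : m + 1 = k
    · subst hmk
      simp [field]
    · by_cases hm : m = k
      · subst hm
        simp [field]
      · simp [hmk, hm]

lemma omegaT_sub_partialSum (x E : ℕ → ℝ) (n m : ℕ) :
    OmegaT (x - fun j => ∑ k ∈ Finset.Icc 1 n, E k * tBasis k j) m
      = OmegaT x m - if m ∈ Finset.Icc 1 n then E m else 0 := by
  rw [omegaT_sub, omegaT_sum_mul, ← Finset.sum_ite_eq' (Finset.Icc 1 n) m E]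
  congr 1
  refine Finset.sum_congr rfl fun k hk => ?_
  rw [omegaT_tBasis (Finset.mem_Icc.mp hk).1]
  by_cases hkm : k = m
  · simp [hkm]
  · simp [hkm, Ne.symm hkm]

lemma omegaT_sub_partialSum_self (x : ℕ → ℝ) (n m : ℕ) :
    OmegaT (x - fun j => ∑ k ∈ Finset.Icc 1 n, OmegaT x k * tBasis k j) m
      = if n < m then OmegaT x m else 0 := by
  rw [omegaT_sub_partialSum]
  rcases Nat.eq_zero_or_pos m with rfl | hm
  · simp [omegaT_zero]
  · by_cases hnm : n < m
    · simp [hnm, Finset.mem_Icc, Nat.not_le.mpr hnm]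
    · simp [hnm, Finset.mem_Icc, Nat.one_le_iff_ne_zero.mpr hm.ne', Nat.not_lt.mp hnm]

lemma abs_omegaT_sub_le_omegaNorm {x : ℕ → ℝ} (hx : Tendsto (OmegaT x) atTop (𝓝 0))
    (E : ℕ → ℝ) {k n : ℕ} (hk : 1 ≤ k) (hkn : k ≤ n) :
    |OmegaT x k - E k| ≤ omegaNorm (x - fun j => ∑ i ∈ Finset.Icc 1 n, E i * tBasis i j) := by
  have htail : OmegaT x =ᶠ[atTop]
      OmegaT (x - fun j => ∑ i ∈ Finset.Icc 1 n, E i * tBasis i j) := by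
    filter_upwards [eventually_gt_atTop n] with m hm
    simp [omegaT_sub_partialSum, Finset.mem_Icc, Nat.not_le.mpr hm]
  have hbdd := ((hx.congr' htail).abs).bddAbove_range
  have := le_ciSup hbdd k
  rwa [omegaT_sub_partialSum, if_pos (Finset.mem_Icc.mpr ⟨hk, hkn⟩)] at this

/-- Schauder-basis expansion in `c₀(Ω)`: every `x ∈ c₀(Ω)` has the norm-convergent
representation `x = ∑ₖ Eₖ t⁽ᵏ⁾` with `Eₖ = (Ωx)ₖ`, and the coefficients in any such
norm-convergent representation are uniquely determined. -/
theorem cZeroOmega_schauder_basis (x : ℕ → ℝ)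
    (hx : Tendsto (OmegaT x) atTop (𝓝 0)) :
    Tendsto (fun n => omegaNorm (x - fun j => ∑ k ∈ Finset.Icc 1 n, OmegaT x k * tBasis k j))
      atTop (𝓝 0) ∧
    ∀ E : ℕ → ℝ,
      Tendsto (fun n => omegaNorm (x - fun j => ∑ k ∈ Finset.Icc 1 n, E k * tBasis k j))
        atTop (𝓝 0) → ∀ k : ℕ, 1 ≤ k → E k = OmegaT x k := by
  refine ⟨?_, fun E hE k hk => ?_⟩
  · simpa only [omegaNorm, omegaT_sub_partialSum_self] using tendsto_iSup_abs_tail hx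
  · have hle : |OmegaT x k - E k| ≤ 0 :=
      ge_of_tendsto hE ((eventually_ge_atTop k).mono fun n hn =>
        abs_omegaT_sub_le_omegaNorm hx E hk hn)
    linarith [abs_nonpos_iff.mp hle]
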